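/- Define β₄ : ℝ × ℝ → ℝ and β₆ : ℝ × ℝ → ℝ by β₄(x, y) = −3x − (4/π)y + (16/π)x² and β₆(x, y) = −4y + (48/π)xy. Then the set of solutions (x, y) of β₄(x, y) = 0 and β₆(x, y) = 0 is exactly { (0, 0), (3π/16, 0), (π/12, −5π²/144) }. -/
import Mathlib


open Real

/-- One-loop β-function of the quartic coupling for the `p = 3` model at vanishing disorder. -/
noncomputable def beta4 (x y : ℝ) : ℝ := -3 * x - (4 / π) * y + (16 / π) * x ^ 2

/-- One-loop β-function of the local sextic coupling for the `p = 3` model at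
vanishing disorder. -/
noncomputable def beta6 (x y : ℝ) : ℝ := -4 * y + (48 / π) * x * y

/-- The simultaneous zeros of the one-loop β-functions of the `p = 3` model at
vanishing disorder are exactly `(0, 0)`, `(3π/16, 0)` and `(π/12, −5π²/144)`. -/
theorem p3_fixed_points :
    {p : ℝ × ℝ | beta4 p.1 p.2 = 0 ∧ beta6 p.1 p.2 = 0} =
      {((0 : ℝ), (0 : ℝ)), (3 * π / 16, 0), (π / 12, -5 * π ^ 2 / 144)} := by
  have hπ : (π : ℝ) ≠ 0 := Real.pi_ne_zero
  ext ⟨x, y⟩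
  simp only [Set.mem_setOf_eq, Set.mem_insert_iff, Set.mem_singleton_iff, Prod.mk.injEq,
    beta4, beta6]
  constructor
  · rintro ⟨h4, h6⟩
    have h6' : y * (48 * x - 4 * π) = 0 := by
      field_simp at h6; linarith
    rcases mul_eq_zero.mp h6' with hy | hx
    · subst hy
      have h4' : x * (16 * x - 3 * π) = 0 := by
        field_simp at h4; linarith
      rcases mul_eq_zero.mp h4' with h | h
      · exact Or.inl ⟨h, rfl⟩
      · exact Or.inr (Or.inl ⟨by linarith, rfl⟩)
    · have hx' : x = π / 12 := by linarith
      subst hx'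
      refine Or.inr (Or.inr ⟨rfl, ?_⟩)
      have := Real.pi_pos
      field_simp at h4 ⊢
      nlinarith [sq_nonneg π]
  · rintro (⟨hx, hy⟩ | ⟨hx, hy⟩ | ⟨hx, hy⟩) <;> subst hx <;> subst hy <;>
      constructor <;> field_simp <;> ring
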